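/- arXiv:2012.08313 — 2 statements merged into one kernel-verified Lean document; each statement's English description precedes it below -/
import Mathlib

section
/- Let X ~ Binomial(k, 1/2) with k ≥ 1, and let a > b > 0. Then E[ X·a / (X·a + (k−X)·b) ] < a/(a+b), where the summand is interpreted as 0 when X = 0 and k−X = 0 cannot both occur for k ≥ 1 (the expression X a/(X a + (k−X) b) is well-defined for 0 ≤ X ≤ k, taking value 0 at X = 0). -/
open Finset

lemma pair_le (a b : ℝ) (hb : 0 < b) (hab : b < a) (u v : ℝ) (hu : 0 ≤ u) (hv : 0 ≤ v)
    (huv : 0 < u + v) :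
    u * a / (u * a + v * b) + v * a / (v * a + u * b) ≤ 2 * a / (a + b) := by
  have ha : 0 < a := hb.trans hab
  have hd1 : 0 < u * a + v * b := by nlinarith
  have hd2 : 0 < v * a + u * b := by nlinarith
  have hd3 : 0 < a + b := by linarith
  rw [div_add_div _ _ (ne_of_gt hd1) (ne_of_gt hd2), div_le_div_iff₀ (by positivity) hd3]
  nlinarith [mul_nonneg (mul_nonneg (mul_nonneg ha.le hb.le) (sub_pos.2 hab).le)
    (sq_nonneg (u - v))]

/-- For `X ~ Binomial(k, 1/2)` with `k ≥ 1` and `a > b > 0`,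
`E[X a / (X a + (k - X) b)] < a / (a + b)`. -/
theorem stmt_3 (k : ℕ) (hk : 1 ≤ k) (a b : ℝ) (hb : 0 < b) (hab : b < a) :
    ∑ x ∈ Finset.range (k + 1),
        (k.choose x : ℝ) * (1 / 2) ^ k *
          (((x : ℝ) * a) / ((x : ℝ) * a + ((k : ℝ) - (x : ℝ)) * b))
      < a / (a + b) := by
  have ha : 0 < a := hb.trans hab
  have hkpos : (0:ℝ) < (k : ℝ) := by exact_mod_cast hk
  set g : ℕ → ℝ := fun x => (k.choose x : ℝ) * (1 / 2) ^ k *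
      (((x : ℝ) * a) / ((x : ℝ) * a + ((k : ℝ) - (x : ℝ)) * b)) with hg
  have hrefl : ∑ x ∈ Finset.range (k + 1), g (k - x) = ∑ x ∈ Finset.range (k + 1), g x := by
    have := Finset.sum_range_reflect g (k + 1)
    simpa using this
  have h2S : (∑ x ∈ Finset.range (k + 1), g x) + (∑ x ∈ Finset.range (k + 1), g x)
      = ∑ x ∈ Finset.range (k + 1), (g x + g (k - x)) := by
    rw [Finset.sum_add_distrib, hrefl]
  have key : ∑ x ∈ Finset.range (k + 1), (g x + g (k - x))
      < ∑ x ∈ Finset.range (k + 1), (k.choose x : ℝ) * (1 / 2) ^ k * (2 * a / (a + b)) := by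
    apply Finset.sum_lt_sum
    · intro x hx
      have hxk : x ≤ k := Nat.lt_succ_iff.mp (Finset.mem_range.mp hx)
      have hxk' : (x : ℝ) ≤ (k : ℝ) := by exact_mod_cast hxk
      have hcast : ((k - x : ℕ) : ℝ) = (k : ℝ) - (x : ℝ) := Nat.cast_sub hxk
      have hcast2 : (k : ℝ) - ((k : ℝ) - (x : ℝ)) = (x : ℝ) := by ring
      have hpos : (0:ℝ) < (k.choose x : ℝ) * (1 / 2) ^ k := by
        have : 0 < k.choose x := Nat.choose_pos hxk
        positivity
      have hle := pair_le a b hb hab (x : ℝ) ((k : ℝ) - (x : ℝ))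
        (Nat.cast_nonneg x) (by linarith) (by linarith)
      simp only [hg]
      rw [Nat.choose_symm hxk, hcast, hcast2, ← mul_add]
      exact mul_le_mul_of_nonneg_left hle hpos.le
    · refine ⟨0, Finset.mem_range.mpr (Nat.succ_pos k), ?_⟩
      have hg0 : g 0 = 0 := by simp [hg]
      have hgk : g (k - 0) = (1 / 2) ^ k := by
        have hden : (k : ℝ) * a + ((k : ℝ) - (k : ℝ)) * b = (k : ℝ) * a := by ring
        have hne : (k : ℝ) * a ≠ 0 := by positivity
        simp [hg, Nat.sub_zero, Nat.choose_self, hden, div_self hne]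
      rw [hg0, hgk, zero_add]
      have h1 : (1:ℝ) < 2 * a / (a + b) := by
        rw [lt_div_iff₀ (by linarith)]; linarith
      have hpow : (0:ℝ) < (1 / 2 : ℝ) ^ k := by positivity
      simp only [Nat.choose_zero_right, Nat.cast_one, one_mul]
      calc (1 / 2 : ℝ) ^ k = (1 / 2) ^ k * 1 := by ring
        _ < (1 / 2) ^ k * (2 * a / (a + b)) := mul_lt_mul_of_pos_left h1 hpow
  have hsum : ∑ x ∈ Finset.range (k + 1), (k.choose x : ℝ) * (1 / 2) ^ k * (2 * a / (a + b))
      = 2 * (a / (a + b)) := by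
    rw [← Finset.sum_mul, ← Finset.sum_mul]
    have hc : ∑ x ∈ Finset.range (k + 1), (k.choose x : ℝ) = 2 ^ k := by
      exact_mod_cast congrArg (Nat.cast : ℕ → ℝ) (Nat.sum_range_choose k)
    rw [hc]
    have h2 : ((2:ℝ)) ^ k * (1 / 2) ^ k = 1 := by
      rw [← mul_pow]; norm_num
    rw [h2]; ring
  have final : (∑ x ∈ Finset.range (k + 1), g x) + (∑ x ∈ Finset.range (k + 1), g x)
      < 2 * (a / (a + b)) := by rw [h2S]; exact key.trans_eq hsum
  linarith
end

section
/- For every s > 0, max over h ∈ [1, N] of min(h, N^s h^{−s}) (for s < 1), min(h, (N/log N) h^{−1}) (for s = 1), or min(h, N h^{−s}) (for s > 1) is O(√N) as N → ∞; i.e., the balanced message complexity per node under a Zipf-s weight distribution is O(√N) for all s, with the worst case s = 1 giving Θ(√(N/log N)). -/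
/-- Balanced message complexity under a Zipf-`s` weight distribution: for every
`s > 0`, the quantity `min(h, cost_s(N, h))` (gossip cost vs. query cost) is
`O(√N)` uniformly over thresholds `h ∈ [1, N]`; in the worst case `s = 1` the
optimal threshold achieves `Θ(√(N / log N))`. -/
theorem stmt_14 (s : ℝ) (hs : 0 < s) :
    (∃ C : ℝ, 0 < C ∧ ∃ N₀ : ℝ, ∀ N : ℝ, N₀ ≤ N → ∀ h : ℝ, 1 ≤ h → h ≤ N →
      min h (if s < 1 then N ^ s * h ^ (-s)
             else if s = 1 then N / Real.log N * h⁻¹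
             else N * h ^ (-s)) ≤ C * Real.sqrt N) ∧
    (s = 1 → ∃ c : ℝ, 0 < c ∧ ∃ N₁ : ℝ, ∀ N : ℝ, N₁ ≤ N →
      ∃ h : ℝ, 1 ≤ h ∧ h ≤ N ∧
        c * Real.sqrt (N / Real.log N) ≤ min h (N / Real.log N * h⁻¹)) := by
  constructor
  · refine ⟨1, one_pos, Real.exp 1, fun N hN h h1 hhN => ?_⟩
    have hNe : (1:ℝ) ≤ Real.exp 1 := by
      have := Real.add_one_le_exp (1:ℝ); linarith
    have hN1 : (1:ℝ) ≤ N := le_trans hNe hN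
    have hN0 : (0:ℝ) < N := by linarith
    have hlog : (1:ℝ) ≤ Real.log N := by
      have := Real.log_le_log (Real.exp_pos 1) hN
      simpa [Real.log_exp] using this
    have hs0 : (0:ℝ) < Real.sqrt N := Real.sqrt_pos.mpr hN0
    have hs1 : (1:ℝ) ≤ Real.sqrt N := by
      rw [show (1:ℝ) = Real.sqrt 1 by simp]
      exact Real.sqrt_le_sqrt hN1
    have h0 : (0:ℝ) < h := lt_of_lt_of_le one_pos h1
    rw [one_mul]
    rcases le_total h (Real.sqrt N) with hle | hgt
    · exact le_trans (min_le_left _ _) hle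
    · refine le_trans (min_le_right _ _) ?_
      have hNh : N / h ≤ Real.sqrt N := by
        have : N / h ≤ N / Real.sqrt N :=
          div_le_div_of_nonneg_left (le_of_lt hN0) hs0 hgt
        simpa [Real.div_sqrt] using this
      split_ifs with hlt heq
      · -- s < 1
        have : N ^ s * h ^ (-s) = (N / h) ^ s := by
          rw [Real.div_rpow (le_of_lt hN0) (le_of_lt h0),
            Real.rpow_neg (le_of_lt h0), div_eq_mul_inv]
        rw [this]
        calc (N / h) ^ s ≤ Real.sqrt N ^ s :=
              Real.rpow_le_rpow (by positivity) hNh (le_of_lt hs)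
          _ ≤ Real.sqrt N ^ (1:ℝ) :=
              Real.rpow_le_rpow_of_exponent_le hs1 (le_of_lt hlt)
          _ = Real.sqrt N := Real.rpow_one _
      · -- s = 1
        have : N / Real.log N * h⁻¹ ≤ N / h := by
          rw [div_mul_eq_mul_div, ← div_eq_mul_inv,
            div_le_div_iff₀ (by linarith : (0:ℝ) < Real.log N) h0]
          rw [div_mul_cancel₀ _ (ne_of_gt h0)]
          nlinarith
        exact le_trans this hNh
      · -- s > 1
        have hs1' : (1:ℝ) ≤ s := by
          rcases lt_or_ge s 1 with h'|h'
          · exact absurd h' hlt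
          · exact h'
        have : h ^ (-s) ≤ h ^ (-1:ℝ) :=
          Real.rpow_le_rpow_of_exponent_le h1 (by linarith)
        calc N * h ^ (-s) ≤ N * h ^ (-1:ℝ) := by
              exact mul_le_mul_of_nonneg_left this (le_of_lt hN0)
          _ = N / h := by rw [Real.rpow_neg_one, div_eq_mul_inv]
          _ ≤ Real.sqrt N := hNh
  · intro hs1
    refine ⟨1, one_pos, Real.exp 1, fun N hN => ?_⟩
    have hNe : (1:ℝ) ≤ Real.exp 1 := by
      have := Real.add_one_le_exp (1:ℝ); linarith
    have hN1 : (1:ℝ) ≤ N := le_trans hNe hN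
    have hN0 : (0:ℝ) < N := by linarith
    have hlog : (1:ℝ) ≤ Real.log N := by
      have := Real.log_le_log (Real.exp_pos 1) hN
      simpa [Real.log_exp] using this
    have hlN : Real.log N ≤ N := le_trans (Real.log_le_sub_one_of_pos hN0) (by linarith)
    set h := Real.sqrt (N / Real.log N) with hh
    have hx0 : (0:ℝ) ≤ N / Real.log N := by positivity
    have hx1 : (1:ℝ) ≤ N / Real.log N := by
      rw [le_div_iff₀ (by linarith : (0:ℝ) < Real.log N)]; linarith
    have hge1 : (1:ℝ) ≤ h := by
      rw [hh, show (1:ℝ) = Real.sqrt 1 by simp]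
      exact Real.sqrt_le_sqrt hx1
    have h0 : (0:ℝ) < h := lt_of_lt_of_le one_pos hge1
    have hsq : h * h = N / Real.log N := Real.mul_self_sqrt hx0
    have hle : h ≤ N := by
      rw [hh]
      have : N / Real.log N ≤ N * N := by
        calc N / Real.log N ≤ N / 1 := by
              apply div_le_div_of_nonneg_left (le_of_lt hN0) one_pos hlog
          _ = N := div_one N
          _ ≤ N * N := le_mul_of_one_le_left (le_of_lt hN0) hN1
      calc Real.sqrt (N / Real.log N) ≤ Real.sqrt (N * N) := Real.sqrt_le_sqrt this
        _ = N := by rw [Real.sqrt_mul_self (le_of_lt hN0)]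
    refine ⟨h, hge1, hle, ?_⟩
    have heq : N / Real.log N * h⁻¹ = h := by
      rw [← hsq]; field_simp
    rw [heq, min_self, one_mul, hh]
end
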